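/- arXiv:1802.08748 — 2 statements merged into one kernel-verified Lean document; each statement's English description precedes it below -/
import Mathlib

section
/- Completeness upon termination: if the Refine algorithm terminates, producing a commutativity condition φ as the disjunction of a finite set of leaf regions each of which implies pointwise commutation of γ₁ and γ₂, and a non-commutativity condition φ̂ as the disjunction of the remaining leaf regions each of which implies pointwise non-commutation, and the leaf regions arise from a binary predicate-splitting tree rooted at True, then for every state σ, either φ σ or φ̂ σ holds; consequently φ is exactly the set of commuting states and φ̂ exactly the set of non-commuting states. -/
inductive RTree (St : Type*) where
  | leaf : (St → Prop) → RTree St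
  | node : (St → Prop) → (St → Prop) → RTree St → RTree St → RTree St

def RTree.label {St : Type*} : RTree St → (St → Prop)
  | .leaf H => H
  | .node H _ _ _ => H

def RTree.wf {St : Type*} : RTree St → Prop
  | .leaf _ => True
  | .node H p l r =>
      l.label = (fun σ => H σ ∧ p σ) ∧ r.label = (fun σ => H σ ∧ ¬ p σ) ∧ l.wf ∧ r.wf

def RTree.leaves {St : Type*} : RTree St → List (St → Prop)
  | .leaf H => [H]
  | .node _ _ l r => l.leaves ++ r.leaves


theorem RTree.exists_leaf {St : Type*} (t : RTree St) (hwf : t.wf) :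
    ∀ σ, t.label σ → ∃ L ∈ t.leaves, L σ := by
  induction t with
  | leaf H => intro σ h; exact ⟨H, List.mem_singleton.mpr rfl, h⟩
  | node H p l r ihl ihr =>
    intro σ h
    obtain ⟨hl, hr, hlw, hrw⟩ := hwf
    by_cases hp : p σ
    · obtain ⟨L, hL, hLσ⟩ := ihl hlw σ (by rw [hl]; exact ⟨h, hp⟩)
      exact ⟨L, List.mem_append_left _ hL, hLσ⟩
    · obtain ⟨L, hL, hLσ⟩ := ihr hrw σ (by rw [hr]; exact ⟨h, hp⟩)
      exact ⟨L, List.mem_append_right _ hL, hLσ⟩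

theorem refine_terminates_complete {St : Type*} (γ₁ γ₂ : St → St)
    (t : RTree St) (hwf : t.wf) (hroot : t.label = fun _ => True)
    (hclass : ∀ L ∈ t.leaves,
      (∀ σ, L σ → γ₁ (γ₂ σ) = γ₂ (γ₁ σ)) ∨ (∀ σ, L σ → γ₁ (γ₂ σ) ≠ γ₂ (γ₁ σ))) :
    ∀ σ : St,
      ((∃ L ∈ t.leaves, (∀ σ', L σ' → γ₁ (γ₂ σ') = γ₂ (γ₁ σ')) ∧ L σ) ∨
        (∃ L ∈ t.leaves, (∀ σ', L σ' → γ₁ (γ₂ σ') ≠ γ₂ (γ₁ σ')) ∧ L σ)) ∧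
      ((∃ L ∈ t.leaves, (∀ σ', L σ' → γ₁ (γ₂ σ') = γ₂ (γ₁ σ')) ∧ L σ) ↔
        γ₁ (γ₂ σ) = γ₂ (γ₁ σ)) ∧
      ((∃ L ∈ t.leaves, (∀ σ', L σ' → γ₁ (γ₂ σ') ≠ γ₂ (γ₁ σ')) ∧ L σ) ↔
        γ₁ (γ₂ σ) ≠ γ₂ (γ₁ σ)) := by
  intro σ
  obtain ⟨L, hL, hLσ⟩ := t.exists_leaf hwf σ (by rw [hroot]; trivial)
  have hmain : (∃ L ∈ t.leaves, (∀ σ', L σ' → γ₁ (γ₂ σ') = γ₂ (γ₁ σ')) ∧ L σ) ∨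
      (∃ L ∈ t.leaves, (∀ σ', L σ' → γ₁ (γ₂ σ') ≠ γ₂ (γ₁ σ')) ∧ L σ) := by
    rcases hclass L hL with h | h
    · exact Or.inl ⟨L, hL, h, hLσ⟩
    · exact Or.inr ⟨L, hL, h, hLσ⟩
  refine ⟨hmain, ⟨?_, ?_⟩, ⟨?_, ?_⟩⟩
  · rintro ⟨L', _, h, hσ⟩; exact h σ hσ
  · intro hc
    rcases hmain with h | ⟨L', _, h, hσ⟩
    · exact h
    · exact absurd hc (h σ hσ)
  · rintro ⟨L', _, h, hσ⟩; exact h σ hσ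
  · intro hc
    rcases hmain with ⟨L', _, h, hσ⟩ | h
    · exact absurd (h σ hσ) hc
    · exact h
end

section
/- If the state space Σ is partitioned into finitely many regions Σ₁, …, Σ_N such that each region is either entirely commuting or entirely non-commuting for γ₁ and γ₂, and each region is definable as a finite conjunction of predicates from a set 𝒫, then there exists a finite binary predicate-splitting tree (using predicates from 𝒫) rooted at True such that every leaf label is either entirely commuting or entirely non-commuting. -/
/-- The splitting predicates used by the internal nodes of a refinement tree. -/
def RTree.splits {St : Type*} : RTree St → List (St → Prop)
  | .leaf _ => []
  | .node _ p l r => p :: (l.splits ++ r.splits)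

/-- Build a tree rooted at `H` splitting successively on the predicates in `ps`. -/
def RTree.build {St : Type*} (H : St → Prop) : List (St → Prop) → RTree St
  | [] => .leaf H
  | p :: ps => .node H p (RTree.build (fun σ => H σ ∧ p σ) ps)
      (RTree.build (fun σ => H σ ∧ ¬ p σ) ps)

theorem RTree.build_label {St : Type*} (H : St → Prop) (ps : List (St → Prop)) :
    (RTree.build H ps).label = H := by
  cases ps <;> rfl

theorem RTree.build_wf {St : Type*} (ps : List (St → Prop)) :
    ∀ H : St → Prop, (RTree.build H ps).wf := by
  induction ps with
  | nil => intro H; trivial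
  | cons p ps ih =>
      intro H
      exact ⟨RTree.build_label _ _, RTree.build_label _ _, ih _, ih _⟩

theorem RTree.build_splits {St : Type*} (ps : List (St → Prop)) :
    ∀ H : St → Prop, ∀ q ∈ (RTree.build H ps).splits, q ∈ ps := by
  induction ps with
  | nil => intro H q hq; exact absurd hq (by simp [RTree.build, RTree.splits])
  | cons p ps ih =>
      intro H q hq
      simp only [RTree.build, RTree.splits, List.mem_cons, List.mem_append] at hq
      rcases hq with h | h | h
      · exact h ▸ List.mem_cons_self
      · exact List.mem_cons_of_mem _ (ih _ _ h)
      · exact List.mem_cons_of_mem _ (ih _ _ h)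

theorem RTree.build_leaves {St : Type*} (ps : List (St → Prop)) :
    ∀ H : St → Prop, ∀ L ∈ (RTree.build H ps).leaves,
      (∀ σ, L σ → H σ) ∧
      (∀ σ σ', L σ → L σ' → ∀ p ∈ ps, (p σ ↔ p σ')) := by
  induction ps with
  | nil =>
      intro H L hL
      simp only [RTree.build, RTree.leaves, List.mem_singleton] at hL
      subst hL
      exact ⟨fun _ h => h, fun _ _ _ _ p hp => absurd hp List.not_mem_nil⟩
  | cons p ps ih =>
      intro H L hL
      simp only [RTree.build, RTree.leaves, List.mem_append] at hL
      rcases hL with h | h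
      · obtain ⟨h1, h2⟩ := ih _ _ h
        refine ⟨fun σ hσ => (h1 σ hσ).1, fun σ σ' hσ hσ' q hq => ?_⟩
        rcases List.mem_cons.mp hq with rfl | hq
        · exact iff_of_true (h1 σ hσ).2 (h1 σ' hσ').2
        · exact h2 σ σ' hσ hσ' q hq
      · obtain ⟨h1, h2⟩ := ih _ _ h
        refine ⟨fun σ hσ => (h1 σ hσ).1, fun σ σ' hσ hσ' q hq => ?_⟩
        rcases List.mem_cons.mp hq with rfl | hq
        · exact iff_of_false (h1 σ hσ).2 (h1 σ' hσ').2
        · exact h2 σ σ' hσ hσ' q hq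

theorem expressiveness_gives_tree {St : Type*} (γ₁ γ₂ : St → St)
    (P : Set (St → Prop)) (N : ℕ) (R : Fin N → Set St)
    (hcover : ∀ σ : St, ∃ i, σ ∈ R i)
    (hdisj : ∀ i j, i ≠ j → R i ∩ R j = ∅)
    (hdef : ∀ i, ∃ L : List ((St → Prop) × Bool),
      (∀ q ∈ L, q.1 ∈ P) ∧
      R i = { σ | ∀ q ∈ L, if q.2 then q.1 σ else ¬ q.1 σ })
    (hhom : ∀ i,
      (∀ σ ∈ R i, γ₁ (γ₂ σ) = γ₂ (γ₁ σ)) ∨ (∀ σ ∈ R i, γ₁ (γ₂ σ) ≠ γ₂ (γ₁ σ))) :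
    ∃ t : RTree St, t.wf ∧ t.label = (fun _ => True) ∧
      (∀ p ∈ t.splits, p ∈ P) ∧
      ∀ L ∈ t.leaves,
        (∀ σ, L σ → γ₁ (γ₂ σ) = γ₂ (γ₁ σ)) ∨ (∀ σ, L σ → γ₁ (γ₂ σ) ≠ γ₂ (γ₁ σ)) := by
  classical
  choose Ls hLsP hLsR using hdef
  set ps : List (St → Prop) :=
    (List.finRange N).flatMap (fun i => (Ls i).map Prod.fst) with hps
  refine ⟨RTree.build (fun _ => True) ps, RTree.build_wf _ _, RTree.build_label _ _, ?_, ?_⟩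
  · intro q hq
    have := RTree.build_splits ps _ q hq
    simp only [hps, List.mem_flatMap, List.mem_map] at this
    obtain ⟨i, _, ⟨x, hx, rfl⟩⟩ := this
    exact hLsP i x hx
  · intro L hL
    obtain ⟨-, hagree⟩ := RTree.build_leaves ps _ L hL
    by_cases hne : ∃ σ, L σ
    · obtain ⟨σ₀, hσ₀⟩ := hne
      obtain ⟨i, hi⟩ := hcover σ₀
      have hsub : ∀ σ, L σ → σ ∈ R i := by
        intro σ hσ
        rw [hLsR i] at hi ⊢
        intro q hq
        have hmem : q.1 ∈ ps := by
          simp only [hps, List.mem_flatMap, List.mem_map]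
          exact ⟨i, List.mem_finRange i, q, hq, rfl⟩
        have hiff := hagree σ σ₀ hσ hσ₀ q.1 hmem
        have hpol := hi q hq
        obtain ⟨p1, b⟩ := q
        cases b
        · simp only [Bool.false_eq_true, if_false] at hpol ⊢
          exact fun h => hpol (hiff.mp h)
        · simp only [if_true] at hpol ⊢
          exact hiff.mpr hpol
      rcases hhom i with h | h
      · exact Or.inl fun σ hσ => h σ (hsub σ hσ)
      · exact Or.inr fun σ hσ => h σ (hsub σ hσ)
    · exact Or.inl fun σ hσ => absurd ⟨σ, hσ⟩ hne
end
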